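/- arXiv:2508.14803 — 2 statements merged into one kernel-verified Lean document; each statement's English description precedes it below -/
import Mathlib

section
/- Let v > w ≥ 0, V = 2^v, W = 2^w, and set p = 2^{V+W-1} + 2^{W-1} and q = 2^{V+W} - 2^W. Then the ℓ^∞ distance between the Sobol' points x_p and x_q equals 2^{-V-W+1}. Consequently, for m = V + W + c with 0 ≤ c < W, the ℓ^∞-separation radius of the first 2^m Sobol' points satisfies q_∞(Q_{2^m}) ≤ 2^{-V-W}. -/
/-!
Write `V = 2 ^ v`, `W = 2 ^ w`. In binary, `p = 2 ^ (V + W - 1) + 2 ^ (W - 1)` has its (1-indexed)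
digits at `W` and `V + W`, and `q = 2 ^ (V + W) - 2 ^ W` at `W + 1, …, V + W`, so
`φ(p) - φ(q) = 2 · 2 ^ (-V-W)`.

Over `𝔽₂` the Pascal matrix sends the digit vector `e_j` to the coefficients of `(1 + X) ^ (j - 1)`,
and `(1 + X) ^ 2 ^ a = 1 + X ^ 2 ^ a` in characteristic two. Hence `P p` has the coefficients of
`(1 + X) ^ (V + W - 1) + (1 + X) ^ (W - 1) = X ^ V (1 + X) ^ (W - 1) = X ^ V (1 + X + ⋯ + X ^ (W - 1))`,
i.e. digits `V + 1, …, V + W`, while `P q` has, by telescoping Pascal's rule, those of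
`((1 + X) ^ (V + W) - (1 + X) ^ W) / X = X ^ (V - 1) (1 + X ^ W)`, i.e. digits `V` and `V + W`.
So the second coordinates differ by `2 · 2 ^ (-V-W)` as well, and the separation radius is at most
half of this distance.
-/

open Finset

/-- The `i`-th binary digit of `n` (1-indexed: `n = Σ nᵢ 2^(i-1)`). -/
def bit (n i : ℕ) : ℕ := if Nat.testBit n (i-1) then 1 else 0

/-- `φ` of the digit vector of `n` truncated to `m` digits: `Σ nᵢ 2^(-i)`. -/
noncomputable def phi (m n : ℕ) : ℝ :=
  ∑ i ∈ Finset.Icc 1 m, (bit n i : ℝ) * (2:ℝ) ^ (-(i:ℤ))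

/-- The `i`-th coordinate of `P_m · (digit vector of n)` over `F₂`, where
`P_m[i][j] = C(j-1, i-1) mod 2` is the upper-triangular Pascal matrix. -/
def pbit (m n i : ℕ) : ℕ :=
  (∑ j ∈ Finset.Icc 1 m, (Nat.choose (j-1) (i-1) % 2) * bit n j) % 2

/-- `φ(P_m · n)`. -/
noncomputable def phiP (m n : ℕ) : ℝ :=
  ∑ i ∈ Finset.Icc 1 m, (pbit m n i : ℝ) * (2:ℝ) ^ (-(i:ℤ))

/-- The `n`-th point of the two-dimensional Sobol' sequence (with `n < 2^m`). -/
noncomputable def sobol (m n : ℕ) : ℝ × ℝ := (phi m n, phiP m n)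

/-- ℓ^∞ distance on ℝ². -/
noncomputable def linf (a b : ℝ × ℝ) : ℝ := max |a.1 - b.1| |a.2 - b.2|

/-- ℓ^∞ separation radius of the first `N` Sobol' points (digit length `m`). -/
noncomputable def sep (m N : ℕ) : ℝ :=
  (1/2) * sInf {d : ℝ | ∃ p q : ℕ, p < N ∧ q < N ∧ p ≠ q ∧ d = linf (sobol m p) (sobol m q)}

/-- ℓ^∞ covering radius of the first `N` Sobol' points (digit length `m`). -/
noncomputable def cov (m N : ℕ) : ℝ :=
  sSup {r : ℝ | ∃ x : ℝ × ℝ, x.1 ∈ Set.Icc (0:ℝ) 1 ∧ x.2 ∈ Set.Icc (0:ℝ) 1 ∧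
    r = sInf {d : ℝ | ∃ n : ℕ, n < N ∧ d = linf x (sobol m n)}}


section BinomialParity

open Polynomial in
lemma choose_two_pow_add_cast_zmod_two (a r k : ℕ) :
    (((2 ^ a + r).choose k : ℕ) : ZMod 2) =
      (r.choose k : ZMod 2) + if 2 ^ a ≤ k then (r.choose (k - 2 ^ a) : ZMod 2) else 0 := by
  have frob : (X + 1 : (ZMod 2)[X]) ^ 2 ^ a = X ^ 2 ^ a + 1 := by
    simpa using add_pow_char_pow (X : (ZMod 2)[X]) 1 2 a
  rw [← coeff_X_add_one_pow, pow_add, frob, add_mul, coeff_add, coeff_X_pow_mul', one_mul,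
    coeff_X_add_one_pow, coeff_X_add_one_pow, add_comm]

lemma choose_two_pow_cast_zmod_two (a k : ℕ) :
    (((2 ^ a).choose k : ℕ) : ZMod 2) = if k = 0 ∨ k = 2 ^ a then 1 else 0 := by
  rcases eq_or_ne k 0 with rfl | h0
  · simp
  rcases eq_or_ne k (2 ^ a) with rfl | hk
  · simp
  rw [if_neg (by tauto), ZMod.natCast_eq_zero_iff]
  exact Nat.prime_two.dvd_choose_pow h0 hk

lemma choose_two_pow_sub_one_cast_zmod_two (a k : ℕ) :
    (((2 ^ a - 1).choose k : ℕ) : ZMod 2) = if k < 2 ^ a then 1 else 0 := by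
  induction a generalizing k with
  | zero => rcases k with _ | k <;> simp
  | succ a ih =>
    rw [show 2 ^ (a + 1) - 1 = 2 ^ a + (2 ^ a - 1) by rw [pow_succ]; omega,
      choose_two_pow_add_cast_zmod_two, ih, ih, pow_succ]
    split_ifs <;> first | decide | omega

lemma mod_two_eq_of_cast_zmod_two {n : ℕ} {P : Prop} [Decidable P]
    (h : (n : ZMod 2) = if P then 1 else 0) : n % 2 = if P then 1 else 0 := by
  have hcast : ((if P then 1 else 0 : ℕ) : ZMod 2) = if P then 1 else 0 := by
    split_ifs <;> simp
  rw [← hcast, ZMod.natCast_eq_natCast_iff' _ _ 2] at h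
  split_ifs at h ⊢ <;> simpa using h

lemma sum_Ioc_choose_pred_add (a b k : ℕ) (h : a ≤ b) :
    ∑ j ∈ Ioc a b, (j - 1).choose k + a.choose (k + 1) = b.choose (k + 1) := by
  induction b, h using Nat.le_induction with
  | base => simp
  | succ b hab ih =>
    rw [← insert_Ioc_right_eq_Ioc_add_one hab, sum_insert (by simp), add_assoc, ih,
      Nat.add_sub_cancel, Nat.choose_succ_succ']

end BinomialParity

lemma sum_Ioc_two_zpow_neg (a b : ℕ) (h : a ≤ b) :
    ∑ i ∈ Ioc a b, (2 : ℝ) ^ (-(i : ℤ)) = 2 ^ (-(a : ℤ)) - 2 ^ (-(b : ℤ)) := by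
  induction b, h using Nat.le_induction with
  | base => simp
  | succ b hab ih =>
    rw [← insert_Ioc_right_eq_Ioc_add_one hab, sum_insert (by simp), ih]
    push_cast
    rw [neg_add, zpow_add₀ two_ne_zero, zpow_neg_one]
    ring

lemma sum_Icc_indicator_mul {R : Type*} [NonAssocSemiring R] {m : ℕ} {S : Finset ℕ}
    (hS : S ⊆ Icc 1 m) {d : ℕ → ℕ} (hd : ∀ i ∈ Icc 1 m, d i = if i ∈ S then 1 else 0)
    (f : ℕ → R) : ∑ i ∈ Icc 1 m, (d i : R) * f i = ∑ i ∈ S, f i := by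
  rw [← inter_eq_right.mpr hS, ← sum_ite_mem]
  refine sum_congr rfl fun i hi => ?_
  rw [hd i hi]
  split_ifs <;> simp

def HasDigits (n : ℕ) (S : Finset ℕ) : Prop :=
  ∀ i, 1 ≤ i → bit n i = if i ∈ S then 1 else 0

section HasDigits

variable {m n : ℕ} {S : Finset ℕ}

lemma hasDigits_of_testBit (h : ∀ k, n.testBit k = true ↔ k + 1 ∈ S) : HasDigits n S := by
  intro i hi
  rw [bit, show i = i - 1 + 1 by omega, Nat.add_sub_cancel]
  simp only [h]

lemma hasDigits_two_pow_add_two_pow {a b : ℕ} (hb : 1 ≤ b) (hab : b < a) :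
    HasDigits (2 ^ (a - 1) + 2 ^ (b - 1)) {a, b} := by
  apply hasDigits_of_testBit
  intro k
  have hlt : 2 ^ (b - 1) < 2 ^ (a - 1) := Nat.pow_lt_pow_right one_lt_two (by omega)
  rw [← mul_one (2 ^ (a - 1)), Nat.two_pow_add_eq_or_of_lt hlt, mul_one, Nat.testBit_or,
    Nat.testBit_two_pow, Nat.testBit_two_pow]
  simp only [Bool.or_eq_true, decide_eq_true_eq, mem_insert, mem_singleton]
  omega

lemma hasDigits_two_pow_sub_two_pow {a b : ℕ} (hab : b ≤ a) :
    HasDigits (2 ^ a - 2 ^ b) (Ioc b a) := by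
  apply hasDigits_of_testBit
  intro k
  rw [show 2 ^ a - 2 ^ b = 2 ^ b * (2 ^ (a - b) - 1) by
      rw [Nat.mul_sub, mul_one, ← pow_add, Nat.add_sub_cancel' hab],
    Nat.testBit_two_pow_mul, Nat.testBit_two_pow_sub_one]
  simp only [Bool.and_eq_true, decide_eq_true_eq, mem_Ioc]
  omega

lemma HasDigits.lt_two_pow (h : HasDigits n S) (hS : S ⊆ Icc 1 m) : n < 2 ^ m := by
  refine Nat.lt_pow_two_of_testBit n fun k hk => ?_
  have hkS : k + 1 ∉ S := fun hkS => by have := mem_Icc.mp (hS hkS); omega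
  have hbit := h (k + 1) (by omega)
  rw [bit, Nat.add_sub_cancel, if_neg hkS] at hbit
  simpa using hbit

lemma HasDigits.phi_eq_sum (h : HasDigits n S) (hS : S ⊆ Icc 1 m) :
    phi m n = ∑ i ∈ S, (2 : ℝ) ^ (-(i : ℤ)) :=
  sum_Icc_indicator_mul hS (fun i hi => h i (mem_Icc.mp hi).1) _

lemma HasDigits.pbit_eq (h : HasDigits n S) (hS : S ⊆ Icc 1 m) (i : ℕ) :
    pbit m n i = (∑ j ∈ S, (j - 1).choose (i - 1)) % 2 := by
  have hsum := sum_Icc_indicator_mul (R := ℕ) hS (fun j hj => h j (mem_Icc.mp hj).1)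
    (fun j => (j - 1).choose (i - 1) % 2)
  simp only [Nat.cast_id] at hsum
  rw [pbit, sum_congr rfl fun j _ => mul_comm _ _, hsum, ← sum_nat_mod]

end HasDigits

lemma phiP_eq_sum_of_pbit {m n : ℕ} {T : Finset ℕ} (hT : T ⊆ Icc 1 m)
    (h : ∀ i ∈ Icc 1 m, pbit m n i = if i ∈ T then 1 else 0) :
    phiP m n = ∑ i ∈ T, (2 : ℝ) ^ (-(i : ℤ)) :=
  sum_Icc_indicator_mul hT h _

section TwoPowers

variable {m a b : ℕ}

lemma two_pow_pred_add_two_pow_pred_lt (hb : 1 ≤ b) (hab : b < a) (ham : a ≤ m) :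
    2 ^ (a - 1) + 2 ^ (b - 1) < 2 ^ m :=
  (hasDigits_two_pow_add_two_pow hb hab).lt_two_pow fun i => by
    simp only [mem_insert, mem_singleton, mem_Icc]; omega

lemma two_pow_sub_two_pow_lt (hab : b ≤ a) (ham : a ≤ m) : 2 ^ a - 2 ^ b < 2 ^ m :=
  (hasDigits_two_pow_sub_two_pow hab).lt_two_pow fun i => by
    simp only [mem_Ioc, mem_Icc]; omega

lemma phi_two_pow_pred_add_two_pow_pred (hb : 1 ≤ b) (hab : b < a) (ham : a ≤ m) :
    phi m (2 ^ (a - 1) + 2 ^ (b - 1)) = (2 : ℝ) ^ (-(a : ℤ)) + 2 ^ (-(b : ℤ)) := by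
  rw [(hasDigits_two_pow_add_two_pow hb hab).phi_eq_sum, sum_pair (by omega)]
  intro i
  simp only [mem_insert, mem_singleton, mem_Icc]
  omega

lemma phi_two_pow_sub_two_pow (hab : b ≤ a) (ham : a ≤ m) :
    phi m (2 ^ a - 2 ^ b) = (2 : ℝ) ^ (-(b : ℤ)) - 2 ^ (-(a : ℤ)) := by
  rw [(hasDigits_two_pow_sub_two_pow hab).phi_eq_sum, sum_Ioc_two_zpow_neg b a hab]
  intro i
  simp only [mem_Ioc, mem_Icc]
  omega

end TwoPowers

section Pascal

variable {v w m : ℕ}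

lemma pbit_two_pow_pred_add_two_pow_pred (hm : 2 ^ v + 2 ^ w ≤ m) {i : ℕ} (hi : 1 ≤ i) :
    pbit m (2 ^ (2 ^ v + 2 ^ w - 1) + 2 ^ (2 ^ w - 1)) i =
      if i ∈ Ioc (2 ^ v) (2 ^ v + 2 ^ w) then 1 else 0 := by
  have hV := Nat.two_pow_pos v
  have hW := Nat.two_pow_pos w
  rw [(hasDigits_two_pow_add_two_pow hW (by omega)).pbit_eq, sum_pair (by omega)]
  · apply mod_two_eq_of_cast_zmod_two
    push_cast
    rw [show 2 ^ v + 2 ^ w - 1 = 2 ^ v + (2 ^ w - 1) by omega, choose_two_pow_add_cast_zmod_two,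
      add_right_comm, CharTwo.add_self_eq_zero, zero_add, choose_two_pow_sub_one_cast_zmod_two]
    simp only [mem_Ioc]
    split_ifs <;> first | rfl | omega
  · intro j
    simp only [mem_insert, mem_singleton, mem_Icc]
    omega

lemma pbit_two_pow_sub_two_pow (hm : 2 ^ v + 2 ^ w ≤ m) {i : ℕ} (hi : 1 ≤ i) :
    pbit m (2 ^ (2 ^ v + 2 ^ w) - 2 ^ (2 ^ w)) i =
      if i ∈ ({2 ^ v, 2 ^ v + 2 ^ w} : Finset ℕ) then 1 else 0 := by
  have hV := Nat.two_pow_pos v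
  have hW := Nat.two_pow_pos w
  rw [(hasDigits_two_pow_sub_two_pow (by omega)).pbit_eq]
  · apply mod_two_eq_of_cast_zmod_two
    have telescope := congrArg (Nat.cast : ℕ → ZMod 2)
      (sum_Ioc_choose_pred_add (2 ^ w) (2 ^ v + 2 ^ w) (i - 1) (by omega))
    rw [Nat.cast_add, choose_two_pow_add_cast_zmod_two, Nat.sub_add_cancel hi, add_comm,
      add_right_inj] at telescope
    rw [telescope, choose_two_pow_cast_zmod_two]
    simp only [mem_insert, mem_singleton]
    split_ifs <;> first | rfl | omega
  · intro j
    simp only [mem_Ioc, mem_Icc]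
    omega

lemma phiP_two_pow_pred_add_two_pow_pred (hm : 2 ^ v + 2 ^ w ≤ m) :
    phiP m (2 ^ (2 ^ v + 2 ^ w - 1) + 2 ^ (2 ^ w - 1)) =
      (2 : ℝ) ^ (-((2 ^ v : ℕ) : ℤ)) - 2 ^ (-((2 ^ v + 2 ^ w : ℕ) : ℤ)) := by
  have hV := Nat.two_pow_pos v
  rw [phiP_eq_sum_of_pbit _ fun i hi => pbit_two_pow_pred_add_two_pow_pred hm (mem_Icc.mp hi).1,
    sum_Ioc_two_zpow_neg _ _ (Nat.le_add_right _ _)]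
  intro i
  simp only [mem_Ioc, mem_Icc]
  omega

lemma phiP_two_pow_sub_two_pow (hm : 2 ^ v + 2 ^ w ≤ m) :
    phiP m (2 ^ (2 ^ v + 2 ^ w) - 2 ^ (2 ^ w)) =
      (2 : ℝ) ^ (-((2 ^ v : ℕ) : ℤ)) + 2 ^ (-((2 ^ v + 2 ^ w : ℕ) : ℤ)) := by
  have hV := Nat.two_pow_pos v
  have hW := Nat.two_pow_pos w
  rw [phiP_eq_sum_of_pbit _ fun i hi => pbit_two_pow_sub_two_pow hm (mem_Icc.mp hi).1,
    sum_pair (show 2 ^ v ≠ 2 ^ v + 2 ^ w by omega)]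
  intro i
  simp only [mem_insert, mem_singleton, mem_Icc]
  omega

lemma linf_sobol_two_pow_pred_add_two_pow_pred_two_pow_sub_two_pow (hm : 2 ^ v + 2 ^ w ≤ m) :
    linf (sobol m (2 ^ (2 ^ v + 2 ^ w - 1) + 2 ^ (2 ^ w - 1)))
      (sobol m (2 ^ (2 ^ v + 2 ^ w) - 2 ^ (2 ^ w))) =
      2 * (2 : ℝ) ^ (-((2 ^ v + 2 ^ w : ℕ) : ℤ)) := by
  have hV := Nat.two_pow_pos v
  have hW := Nat.two_pow_pos w
  rw [linf, sobol, sobol, phi_two_pow_pred_add_two_pow_pred hW (by omega) hm,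
    phi_two_pow_sub_two_pow (by omega) hm, phiP_two_pow_pred_add_two_pow_pred hm,
    phiP_two_pow_sub_two_pow hm]
  dsimp only
  rw [show ∀ x y : ℝ, x + y - (y - x) = 2 * x by intros; ring,
    show ∀ x y : ℝ, x - y - (x + y) = -(2 * y) by intros; ring, abs_neg, max_self,
    abs_of_pos (by positivity)]

end Pascal

lemma sep_le_half_linf {m N p q : ℕ} (hp : p < N) (hq : q < N) (hpq : p ≠ q) :
    sep m N ≤ linf (sobol m p) (sobol m q) / 2 := by
  have hbdd : BddBelow
      {d : ℝ | ∃ p q : ℕ, p < N ∧ q < N ∧ p ≠ q ∧ d = linf (sobol m p) (sobol m q)} :=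
    ⟨0, by rintro _ ⟨p, q, -, -, -, rfl⟩; exact (abs_nonneg _).trans (le_max_left _ _)⟩
  rw [sep, one_div_mul_eq_div]
  gcongr
  exact csInf_le hbdd ⟨p, q, hp, hq, hpq, rfl⟩

theorem stmt_14_general (v w c : ℕ) :
    linf (sobol (2 ^ v + 2 ^ w + c) (2 ^ (2 ^ v + 2 ^ w - 1) + 2 ^ (2 ^ w - 1)))
         (sobol (2 ^ v + 2 ^ w + c) (2 ^ (2 ^ v + 2 ^ w) - 2 ^ (2 ^ w))) =
      (2:ℝ) ^ (-(2 ^ v : ℤ) - (2 ^ w : ℤ) + 1) ∧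
    sep (2 ^ v + 2 ^ w + c) (2 ^ (2 ^ v + 2 ^ w + c)) ≤
      (2:ℝ) ^ (-(2 ^ v : ℤ) - (2 ^ w : ℤ)) := by
  have hV := Nat.two_pow_pos v
  have hW := Nat.two_pow_pos w
  have hdist := linf_sobol_two_pow_pred_add_two_pow_pred_two_pow_sub_two_pow
    (Nat.le_add_right (2 ^ v + 2 ^ w) c)
  have hexp : (2 : ℝ) ^ (-((2 ^ v + 2 ^ w : ℕ) : ℤ)) = 2 ^ (-(2 ^ v : ℤ) - (2 ^ w : ℤ)) := by
    push_cast; ring_nf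
  refine ⟨by rw [hdist, hexp, zpow_add_one₀ two_ne_zero, mul_comm], ?_⟩
  have hpq : 2 ^ (2 ^ v + 2 ^ w - 1) + 2 ^ (2 ^ w - 1) ≠ 2 ^ (2 ^ v + 2 ^ w) - 2 ^ (2 ^ w) := by
    intro h
    rw [h, linf, sub_self, sub_self, abs_zero, max_self] at hdist
    exact (by positivity : (0 : ℝ) < 2 * 2 ^ (-((2 ^ v + 2 ^ w : ℕ) : ℤ))).ne hdist
  calc _ ≤ _ := sep_le_half_linf (two_pow_pred_add_two_pow_pred_lt hW (by omega) (by omega))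
        (two_pow_sub_two_pow_lt (by omega) (by omega)) hpq
    _ = _ := by rw [hdist, hexp]; ring

theorem stmt_14 (v w c : ℕ) (hvw : w < v) (hc : c < 2 ^ w) :
    linf (sobol (2 ^ v + 2 ^ w + c) (2 ^ (2 ^ v + 2 ^ w - 1) + 2 ^ (2 ^ w - 1)))
         (sobol (2 ^ v + 2 ^ w + c) (2 ^ (2 ^ v + 2 ^ w) - 2 ^ (2 ^ w))) =
      (2:ℝ) ^ (-(2 ^ v : ℤ) - (2 ^ w : ℤ) + 1) ∧
    sep (2 ^ v + 2 ^ w + c) (2 ^ (2 ^ v + 2 ^ w + c)) ≤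
      (2:ℝ) ^ (-(2 ^ v : ℤ) - (2 ^ w : ℤ)) :=
  stmt_14_general v w c
end

section
/- If m = 2^v or m = 2^v - 1 for some v ∈ ℕ, then the ℓ^∞-separation radius of the first 2^m points of the two-dimensional Sobol' sequence equals 2^{-m-1}. -/
open Finset

/-!
The first coordinates `φ(n)`, `n < 2^m`, are the bit reversals of `n` scaled by `2^(-m)`, hence
distinct multiples of `2^(-m)`; so every pairwise ℓ^∞ distance is at least `2^(-m)`.

Equality is attained at `x₁ = (1/2, 1/2)` and one more point: the one with digits `e₁ + e_m` if
`m = 2^v`, the one with digits `e₂ + ⋯ + e_m` if `m = 2^v - 1`. Every entry of row `2^v - 1` of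
Pascal's triangle is odd (Lucas). Hence, mod 2, column `m` of `P_m` (first case) and the sum of all
its columns, `(C(m, i))ᵢ` by the hockey-stick identity (second case), are all-ones vectors, and in
both cases `P_m` maps the second point's digits to `(0, 1, …, 1)`. Both points therefore differ
from `x₁` by exactly `2^(-m)` in each coordinate.
-/

-- `phi m n = binFrac m (bit n)` and `phiP m n = binFrac m (pbit m n)` hold by definition.
noncomputable def binFrac (m : ℕ) (a : ℕ → ℕ) : ℝ :=
  ∑ i ∈ Icc 1 m, (a i : ℝ) * (2:ℝ) ^ (-(i:ℤ))

section BinFrac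

variable {m : ℕ}

lemma binFrac_congr {a b : ℕ → ℕ} (h : ∀ i ∈ Icc 1 m, a i = b i) :
    binFrac m a = binFrac m b :=
  sum_congr rfl fun i hi => by rw [h i hi]

lemma binFrac_add (a b : ℕ → ℕ) : binFrac m (a + b) = binFrac m a + binFrac m b := by
  simp only [binFrac, Pi.add_apply, Nat.cast_add, add_mul, sum_add_distrib]

lemma binFrac_one (m : ℕ) : binFrac m 1 = 1 - (2:ℝ) ^ (-(m:ℤ)) := by
  induction m with
  | zero => simp [binFrac]
  | succ m ih =>
    rw [binFrac, sum_Icc_succ_top (by omega), ← binFrac, ih]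
    simp only [Pi.one_apply, Nat.cast_one, one_mul]
    push_cast
    rw [neg_add, zpow_add₀ two_ne_zero]
    ring

lemma binFrac_add_of_add_eq_one {a b : ℕ → ℕ} (h : ∀ i ∈ Icc 1 m, a i + b i = 1) :
    binFrac m a + binFrac m b = 1 - (2:ℝ) ^ (-(m:ℤ)) := by
  rw [← binFrac_add, binFrac_congr (a := a + b) (b := 1) h, binFrac_one]

end BinFrac

section Digits

variable {m i : ℕ}

lemma bit_le_one (n i : ℕ) : bit n i ≤ 1 := by
  unfold bit; split <;> simp

lemma bit_two_pow (k : ℕ) (hi : 1 ≤ i) : bit (2 ^ k) i = if i = k + 1 then 1 else 0 := by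
  simp only [bit, Nat.testBit_two_pow, decide_eq_true_eq]
  split_ifs <;> omega

lemma bit_one (hi : 1 ≤ i) : bit 1 i = if i = 1 then 1 else 0 := by
  simpa using bit_two_pow 0 hi

lemma bit_two_pow_add {k x : ℕ} (hx : x < 2 ^ k) (i : ℕ) :
    bit (2 ^ k + x) i = bit (2 ^ k) i + bit x i := by
  simp only [bit, Nat.testBit_two_pow]
  rcases lt_trichotomy (i - 1) k with hlt | heq | hgt
  · simp [Nat.testBit_two_pow_add_gt hlt, hlt.ne']
  · simp [heq, Nat.testBit_two_pow_add_eq, Nat.testBit_lt_two_pow hx]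
  · have hsum : 2 ^ k + x < 2 ^ (i - 1) :=
      calc 2 ^ k + x < 2 ^ (k + 1) := by rw [pow_succ]; omega
        _ ≤ 2 ^ (i - 1) := Nat.pow_le_pow_right two_pos hgt
    simp [Nat.testBit_lt_two_pow hsum, hgt.ne,
      Nat.testBit_lt_two_pow (hx.trans (Nat.pow_lt_pow_right one_lt_two hgt))]

lemma bit_two_pow_sub_two_add_bit_one (hi : i ∈ Icc 1 m) : bit (2 ^ m - 2) i + bit 1 i = 1 := by
  obtain ⟨hi1, him⟩ := mem_Icc.1 hi
  have hdouble : 2 ^ m - 2 = (2 ^ (m - 1) - 1) * 2 ^ 1 := by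
    have : 2 ^ m = 2 ^ (m - 1) * 2 := by rw [← pow_succ, Nat.sub_add_cancel (by omega)]
    rw [pow_one]; omega
  rw [hdouble, bit_one hi1]
  simp only [bit, Nat.testBit_mul_two_pow, Nat.testBit_two_pow_sub_one, Bool.and_eq_true,
    decide_eq_true_eq]
  split_ifs <;> omega

lemma sum_bit_two_pow_mul {R : Type*} [Semiring R] {k : ℕ} (hk : k < m) (f : ℕ → R) :
    ∑ j ∈ Icc 1 m, (bit (2 ^ k) j : R) * f j = f (k + 1) := by
  rw [sum_congr rfl fun j hj => by rw [bit_two_pow k (mem_Icc.1 hj).1]]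
  simp [mem_Icc.2 ⟨Nat.le_add_left 1 k, hk⟩]

end Digits

section Separation

def revBits (m n : ℕ) : ℕ := ∑ i ∈ Icc 1 m, bit n i * 2 ^ (m - i)

lemma revBits_succ (m n : ℕ) : revBits (m + 1) n = 2 * revBits m n + bit n (m + 1) := by
  rw [revBits, sum_Icc_succ_top (by omega), revBits, mul_sum, Nat.sub_self, pow_zero, mul_one]
  congr 1
  refine sum_congr rfl fun i hi => ?_
  rw [Nat.sub_add_comm (mem_Icc.1 hi).2, pow_succ]
  ring

lemma phi_eq_revBits (m n : ℕ) : phi m n = revBits m n * (2:ℝ) ^ (-(m:ℤ)) := by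
  rw [phi, revBits, Nat.cast_sum, sum_mul]
  refine sum_congr rfl fun i hi => ?_
  have him : i ≤ m := (mem_Icc.1 hi).2
  rw [Nat.cast_mul, Nat.cast_pow, Nat.cast_ofNat, mul_assoc, ← zpow_natCast,
    ← zpow_add₀ two_ne_zero]
  congr 2
  omega

lemma bit_eq_of_revBits_eq {m p q : ℕ} (h : revBits m p = revBits m q) :
    ∀ i ∈ Icc 1 m, bit p i = bit q i := by
  induction m with
  | zero => simp
  | succ m ih =>
    rw [revBits_succ, revBits_succ] at h
    have hp := bit_le_one p (m + 1)
    have hq := bit_le_one q (m + 1)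
    intro i hi
    rcases (mem_Icc.1 hi).2.lt_or_eq with hlt | rfl
    · exact ih (by omega) i (mem_Icc.2 ⟨(mem_Icc.1 hi).1, by omega⟩)
    · omega

lemma eq_of_revBits_eq {m p q : ℕ} (hp : p < 2 ^ m) (hq : q < 2 ^ m)
    (h : revBits m p = revBits m q) : p = q := by
  refine Nat.eq_of_testBit_eq fun k => ?_
  rcases lt_or_ge k m with hk | hk
  · have := bit_eq_of_revBits_eq h (k + 1) (mem_Icc.2 ⟨by omega, hk⟩)
    simp only [bit, Nat.add_sub_cancel] at this
    split_ifs at this <;> simp_all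
  · have hk' := Nat.pow_le_pow_right two_pos hk
    rw [Nat.testBit_lt_two_pow (hp.trans_le hk'), Nat.testBit_lt_two_pow (hq.trans_le hk')]

lemma two_zpow_neg_le_abs_phi_sub {m p q : ℕ} (hp : p < 2 ^ m) (hq : q < 2 ^ m) (hpq : p ≠ q) :
    (2:ℝ) ^ (-(m:ℤ)) ≤ |phi m p - phi m q| := by
  have hne : (revBits m p : ℤ) ≠ revBits m q := by
    exact_mod_cast mt (eq_of_revBits_eq hp hq) hpq
  have hone : (1:ℝ) ≤ |(revBits m p : ℝ) - revBits m q| := by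
    exact_mod_cast Int.one_le_abs (sub_ne_zero.2 hne)
  rw [phi_eq_revBits, phi_eq_revBits, ← sub_mul, abs_mul,
    abs_of_pos (zpow_pos two_pos (-(m:ℤ)) : (0:ℝ) < _)]
  exact le_mul_of_one_le_left (by positivity) hone

lemma two_zpow_neg_le_linf_sobol {m p q : ℕ} (hp : p < 2 ^ m) (hq : q < 2 ^ m) (hpq : p ≠ q) :
    (2:ℝ) ^ (-(m:ℤ)) ≤ linf (sobol m p) (sobol m q) :=
  (two_zpow_neg_le_abs_phi_sub hp hq hpq).trans (le_max_left _ _)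

end Separation

section Pascal

variable {m i : ℕ}

lemma choose_two_pow_sub_one_odd (v : ℕ) {k : ℕ} (hk : k ≤ 2 ^ v - 1) :
    Odd ((2 ^ v - 1).choose k) := by
  induction v generalizing k with
  | zero => simp_all
  | succ v ih =>
    have : Fact (Nat.Prime 2) := ⟨Nat.prime_two⟩
    have hlucas :=
      Choose.choose_modEq_choose_mod_mul_choose_div_nat (n := 2 ^ (v + 1) - 1) (k := k) (p := 2)
    have hpow : 2 ^ (v + 1) = 2 * 2 ^ v := pow_succ' 2 v
    have hpos : 1 ≤ 2 ^ v := Nat.one_le_two_pow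
    have hbit : (1 : ℕ).choose (k % 2) = 1 := by
      rcases Nat.mod_two_eq_zero_or_one k with h | h <;> simp [h]
    rw [show (2 ^ (v + 1) - 1) % 2 = 1 by omega, show (2 ^ (v + 1) - 1) / 2 = 2 ^ v - 1 by omega,
      hbit, one_mul] at hlucas
    have := Nat.odd_iff.1 (ih (k := k / 2) (by omega))
    exact Nat.odd_iff.2 (Eq.trans hlucas this)

lemma sum_Icc_choose_pred (m : ℕ) (hi : 1 ≤ i) :
    ∑ j ∈ Icc 1 m, (j - 1).choose (i - 1) = m.choose i := by
  induction m with
  | zero => simp [Nat.choose_eq_zero_of_lt hi]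
  | succ m ih =>
    obtain ⟨r, rfl⟩ : ∃ r, i = r + 1 := ⟨i - 1, by omega⟩
    rw [sum_Icc_succ_top (by omega), ih, Nat.add_sub_cancel, Nat.add_sub_cancel,
      Nat.choose_succ_succ', add_comm]

lemma pbit_lt_two (m n i : ℕ) : pbit m n i < 2 := Nat.mod_lt _ two_pos

lemma cast_pbit (m n i : ℕ) :
    (pbit m n i : ZMod 2) =
      ∑ j ∈ Icc 1 m, (bit n j : ZMod 2) * ((j - 1).choose (i - 1) : ZMod 2) := by
  simp only [pbit, ZMod.natCast_mod, Nat.cast_sum, Nat.cast_mul, mul_comm]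

lemma pbit_one (hi : i ∈ Icc 1 m) : pbit m 1 i = bit 1 i := by
  obtain ⟨hi1, him⟩ := mem_Icc.1 hi
  have hcast : (pbit m 1 i : ZMod 2) = bit 1 i := by
    have hcol := sum_bit_two_pow_mul (R := ZMod 2) (k := 0) (m := m) (by omega)
      fun j => ((j - 1).choose (i - 1) : ZMod 2)
    rw [pow_zero] at hcol
    rw [cast_pbit, hcol, bit_one hi1]
    rcases hi1.eq_or_lt with rfl | hlt
    · simp
    · simp [hlt.ne', Nat.choose_eq_zero_of_lt (show 0 < i - 1 by omega)]
  have := bit_le_one 1 i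
  have := pbit_lt_two m 1 i
  rw [ZMod.natCast_eq_natCast_iff'] at hcast
  omega

lemma pbit_add_pbit_eq_one {p q : ℕ}
    (h : ∑ j ∈ Icc 1 m,
      ((bit p j + bit q j : ℕ) : ZMod 2) * ((j - 1).choose (i - 1) : ZMod 2) = 1) :
    pbit m p i + pbit m q i = 1 := by
  have hcast : ((pbit m p i + pbit m q i : ℕ) : ZMod 2) = ((1 : ℕ) : ZMod 2) := by
    simpa only [Nat.cast_add, cast_pbit, ← sum_add_distrib, ← add_mul, Nat.cast_one] using h
  have := pbit_lt_two m p i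
  have := pbit_lt_two m q i
  rw [ZMod.natCast_eq_natCast_iff'] at hcast
  omega

end Pascal

section Coordinates

variable {m : ℕ}

lemma phi_two_pow {k : ℕ} (hk : k < m) : phi m (2 ^ k) = (2:ℝ) ^ (-((k:ℤ) + 1)) := by
  rw [phi, sum_bit_two_pow_mul hk]
  push_cast
  rfl

lemma phi_one (hm : 1 ≤ m) : phi m 1 = 1 / 2 := by
  simpa using phi_two_pow (m := m) (k := 0) (by omega)

lemma phiP_one (hm : 1 ≤ m) : phiP m 1 = 1 / 2 := by
  rw [← phi_one hm]
  exact binFrac_congr fun i hi => pbit_one hi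

lemma phi_two_pow_add {k x : ℕ} (hx : x < 2 ^ k) :
    phi m (2 ^ k + x) = phi m (2 ^ k) + phi m x := by
  change binFrac m _ = binFrac m _ + binFrac m _
  rw [← binFrac_add]
  exact binFrac_congr fun i _ => bit_two_pow_add hx i

variable {v : ℕ}

lemma phi_two_pow_pred_add_one (hm : 2 ≤ m) :
    phi m (2 ^ (m - 1) + 1) = 1 / 2 + (2:ℝ) ^ (-(m:ℤ)) := by
  rw [phi_two_pow_add (Nat.one_lt_two_pow (by omega)), phi_two_pow (by omega), phi_one (by omega),
    Nat.cast_pred (by omega), sub_add_cancel, add_comm]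

lemma phiP_two_pow_pred_add_one_add_phiP_one (hv : 1 ≤ v) (hm : m = 2 ^ v) :
    phiP m (2 ^ (m - 1) + 1) + phiP m 1 = 1 - (2:ℝ) ^ (-(m:ℤ)) := by
  have hm2 : 2 ≤ m := hm ▸ Nat.le_self_pow (by omega) 2
  refine binFrac_add_of_add_eq_one fun i hi => pbit_add_pbit_eq_one ?_
  obtain ⟨hi1, him⟩ := mem_Icc.1 hi
  have hdigits :
      ∀ j, ((bit (2 ^ (m - 1) + 1) j + bit 1 j : ℕ) : ZMod 2) = bit (2 ^ (m - 1)) j := by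
    intro j
    rw [bit_two_pow_add (Nat.one_lt_two_pow (by omega)), Nat.cast_add, Nat.cast_add, add_assoc,
      CharTwo.add_self_eq_zero, add_zero]
  simp only [hdigits]
  rw [sum_bit_two_pow_mul (by omega), Nat.sub_add_cancel (by omega), ZMod.natCast_eq_one_iff_odd]
  exact hm ▸ choose_two_pow_sub_one_odd v (by omega)

lemma phi_two_pow_sub_two_add_phi_one :
    phi m (2 ^ m - 2) + phi m 1 = 1 - (2:ℝ) ^ (-(m:ℤ)) :=
  binFrac_add_of_add_eq_one fun _ hi => bit_two_pow_sub_two_add_bit_one hi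

lemma phiP_two_pow_sub_two_add_phiP_one (hm : m = 2 ^ v - 1) :
    phiP m (2 ^ m - 2) + phiP m 1 = 1 - (2:ℝ) ^ (-(m:ℤ)) := by
  refine binFrac_add_of_add_eq_one fun i hi => pbit_add_pbit_eq_one ?_
  obtain ⟨hi1, him⟩ := mem_Icc.1 hi
  rw [sum_congr rfl fun j hj => by rw [bit_two_pow_sub_two_add_bit_one hj, Nat.cast_one, one_mul],
    ← Nat.cast_sum, sum_Icc_choose_pred m hi1, ZMod.natCast_eq_one_iff_odd]
  exact hm ▸ choose_two_pow_sub_one_odd v (hm ▸ him)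

end Coordinates

lemma sobol_one {m : ℕ} (hm : 1 ≤ m) : sobol m 1 = (1 / 2, 1 / 2) :=
  Prod.ext (phi_one hm) (phiP_one hm)

lemma sobol_two_pow_pred_add_one {m v : ℕ} (hv : 1 ≤ v) (hm : m = 2 ^ v) :
    sobol m (2 ^ (m - 1) + 1) = (1 / 2 + (2:ℝ) ^ (-(m:ℤ)), 1 / 2 - (2:ℝ) ^ (-(m:ℤ))) := by
  have hm2 : 2 ≤ m := hm ▸ Nat.le_self_pow (by omega) 2
  have hphiP := phiP_two_pow_pred_add_one_add_phiP_one hv hm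
  rw [phiP_one (by omega)] at hphiP
  exact Prod.ext (phi_two_pow_pred_add_one hm2) (by change phiP _ _ = _; linarith)

lemma sobol_two_pow_sub_two {m v : ℕ} (hm1 : 1 ≤ m) (hm : m = 2 ^ v - 1) :
    sobol m (2 ^ m - 2) = (1 / 2 - (2:ℝ) ^ (-(m:ℤ)), 1 / 2 - (2:ℝ) ^ (-(m:ℤ))) := by
  have hphi := phi_two_pow_sub_two_add_phi_one (m := m)
  have hphiP := phiP_two_pow_sub_two_add_phiP_one hm
  rw [phi_one hm1] at hphi
  rw [phiP_one hm1] at hphiP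
  exact Prod.ext (by change phi _ _ = _; linarith) (by change phiP _ _ = _; linarith)

theorem stmt_17 (m v : ℕ) (hv : 1 ≤ v) (h : m = 2 ^ v ∨ m = 2 ^ v - 1) :
    sep m (2 ^ m) = (2:ℝ) ^ (-(m:ℤ) - 1) := by
  have h2v : 2 ≤ 2 ^ v := Nat.le_self_pow (by omega) 2
  have hm1 : 1 ≤ m := by omega
  have hpow : 2 ^ m = 2 * 2 ^ (m - 1) := by rw [← pow_succ', Nat.sub_add_cancel hm1]
  obtain ⟨q, hq, hq1, hdist⟩ :
      ∃ q < 2 ^ m, q ≠ 1 ∧ linf (sobol m 1) (sobol m q) = (2:ℝ) ^ (-(m:ℤ)) := by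
    rcases h with hm | hm
    · have : 2 ≤ 2 ^ (m - 1) := Nat.le_self_pow (by omega) 2
      refine ⟨2 ^ (m - 1) + 1, by omega, by omega, ?_⟩
      rw [sobol_one hm1, sobol_two_pow_pred_add_one hv hm]
      simp [linf]
    · have : 1 ≤ 2 ^ (m - 1) := Nat.one_le_two_pow
      refine ⟨2 ^ m - 2, by omega, by omega, ?_⟩
      rw [sobol_one hm1, sobol_two_pow_sub_two hm1 hm]
      simp [linf]
  have hleast : IsLeast {d : ℝ | ∃ p q : ℕ, p < 2 ^ m ∧ q < 2 ^ m ∧ p ≠ q ∧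
      d = linf (sobol m p) (sobol m q)} ((2:ℝ) ^ (-(m:ℤ))) := by
    refine ⟨⟨1, q, Nat.one_lt_two_pow (by omega), hq, hq1.symm, hdist.symm⟩, ?_⟩
    rintro _ ⟨p, q, hp, hq, hpq, rfl⟩
    exact two_zpow_neg_le_linf_sobol hp hq hpq
  rw [sep, hleast.csInf_eq, zpow_sub_one₀ two_ne_zero]
  ring
end
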